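/- Let a, τ, λ_k > 0 with τ < a. There is no real pair (x, y) with x ≥ 0 satisfying simultaneously e^{-τx} cos(τy) + (x² − y²)/λ_k + ax = 0 and −e^{-τx} sin(τy) + 2xy/λ_k + ay = 0. -/

import Mathlib

/-!
Write the root as `x + i y` with `x ≥ 0`. The imaginary part of the equation gives
`y (2x/λ_k + a) = e^{-τx} sin(τy)`, whose modulus is at most `τ |y|` because `e^{-τx} ≤ 1` and
`|sin t| ≤ |t|`; since `2x/λ_k + a ≥ a > τ`, this forces `y = 0`. The real part then reads
`e^{-τx} + x²/λ_k + a x = 0`, impossible as the left side is positive.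
-/

open Real

lemma abs_exp_neg_mul_mul_sin_le {τ x : ℝ} (hτ : 0 ≤ τ) (hx : 0 ≤ x) (y : ℝ) :
    |exp (-τ * x) * sin (τ * y)| ≤ τ * |y| :=
  calc |exp (-τ * x) * sin (τ * y)|
      = exp (-τ * x) * |sin (τ * y)| := by rw [abs_mul, abs_of_pos (exp_pos _)]
    _ ≤ 1 * |τ * y| :=
      mul_le_mul (exp_le_one_iff.mpr (by nlinarith)) abs_sin_le_abs (abs_nonneg _) zero_le_one
    _ = τ * |y| := by rw [one_mul, abs_mul, abs_of_nonneg hτ]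

lemma eq_zero_of_neg_exp_mul_sin_add_eq_zero {a τ lamk x y : ℝ} (hτ : 0 ≤ τ) (hk : 0 < lamk)
    (hτa : τ < a) (hx : 0 ≤ x)
    (h : -exp (-τ * x) * sin (τ * y) + 2 * x * y / lamk + a * y = 0) : y = 0 := by
  have hy : y * (2 * x / lamk + a) = exp (-τ * x) * sin (τ * y) := by
    field_simp at h ⊢; linarith
  have hgap : 0 < 2 * x / lamk + a - τ := by
    have : 0 ≤ 2 * x / lamk := by positivity
    linarith
  have hbound : |y| * (2 * x / lamk + a) ≤ τ * |y| := by
    have := abs_exp_neg_mul_mul_sin_le hτ hx y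
    rwa [← hy, abs_mul, abs_of_pos (by linarith : 0 < 2 * x / lamk + a)] at this
  have : |y| * (2 * x / lamk + a - τ) ≤ 0 := by linarith
  exact abs_nonpos_iff.mp (nonpos_of_mul_nonpos_left this hgap)

theorem stmt_16_general (a τ lamk : ℝ) (hτ : 0 < τ) (hk : 0 < lamk)
    (hτa : τ < a) :
    ¬ ∃ x y : ℝ, 0 ≤ x ∧
      Real.exp (-τ * x) * Real.cos (τ * y) + (x ^ 2 - y ^ 2) / lamk + a * x = 0 ∧
      -Real.exp (-τ * x) * Real.sin (τ * y) + 2 * x * y / lamk + a * y = 0 := by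
  rintro ⟨x, y, hx, hre, him⟩
  obtain rfl : y = 0 := eq_zero_of_neg_exp_mul_sin_add_eq_zero hτ.le hk hτa hx him
  have ha : 0 < a := hτ.trans hτa
  have hpos : 0 < exp (-τ * x) + x ^ 2 / lamk + a * x := by positivity
  simp only [mul_zero, cos_zero, mul_one, zero_pow two_ne_zero, sub_zero] at hre
  linarith

theorem stmt_16 (a τ lamk : ℝ) (ha : 0 < a) (hτ : 0 < τ) (hk : 0 < lamk)
    (hτa : τ < a) :
    ¬ ∃ x y : ℝ, 0 ≤ x ∧
      Real.exp (-τ * x) * Real.cos (τ * y) + (x ^ 2 - y ^ 2) / lamk + a * x = 0 ∧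
      -Real.exp (-τ * x) * Real.sin (τ * y) + 2 * x * y / lamk + a * y = 0 :=
  stmt_16_general a τ lamk hτ hk hτa
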